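/- Let r > 0 and c ∈ ℝ, and define u : (0, r) → ℝ by u(α) = c − (r^{2m} − α^{2m})^{1/(2m)}. Then u' > 0 on (0, r) and the principal curvatures of the corresponding rotational surface satisfy k₁(α) = k₂(α) = −1/r for all α ∈ (0, r); that is, the sphere of radius r of the norm ‖·‖ (translated along the rotation axis) has both principal curvatures constant equal to −1/r. -/

import Mathlib

open Real Set

/-!
With `q = 2m`, `s(α) = (r^q - α^q)^{1/q}` and `t = α / s`, the profile is `u = c - s` and
`s' = -t^{q-1}`, so `u' = t^{q-1}`. The circle equation gives `1 + t^q = (r/s)^q`, and from it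
`t' = (r/s)^q / s`. Substituting, every fractional power of `u'` in `k₁`, `k₂` becomes an
integral power of `t` or of `r/s`, and both curvatures collapse to `-1/r`.
-/

lemma Real.rpow_rpow_div {x : ℝ} (hx : 0 ≤ x) {y : ℝ} (hy : y ≠ 0) (z : ℝ) :
    (x ^ y) ^ (z / y) = x ^ z := by
  rw [← rpow_mul hx, mul_div_cancel₀ z hy]

/-- The upper right quarter of the circle `|x|^q + |y|^q = r^q`, as a graph over the `x`-axis. -/
noncomputable def circleGraph (q r α : ℝ) : ℝ := (r ^ q - α ^ q) ^ (1 / q)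

/-- The principal curvatures `k₁`, `k₂` of the rotational surface with profile `u`, in terms of
`α`, `u'(α)` and `u''(α)`, for the norm with exponent `q = 2m`. -/
noncomputable def principalCurvature₁ (q u' u'' : ℝ) : ℝ :=
  -(1 / (q - 1)) * (1 + u' ^ (q / (q - 1))) ^ (-(q + 1) / q) * u' ^ (-(q - 2) / (q - 1)) * u''

noncomputable def principalCurvature₂ (q α u' : ℝ) : ℝ :=
  -(1 / α) * (1 + u' ^ (q / (q - 1))) ^ (-1 / q) * u' ^ (1 / (q - 1))

section

variable {q r α : ℝ}

lemma circleGraph_pos (hq : 0 < q) (hα : α ∈ Ioo 0 r) : 0 < circleGraph q r α :=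
  rpow_pos_of_pos (sub_pos.2 (rpow_lt_rpow hα.1.le hα.2 hq)) _

lemma circleGraph_rpow (hq : 0 < q) (hα : α ∈ Ioo 0 r) :
    circleGraph q r α ^ q = r ^ q - α ^ q := by
  rw [circleGraph, one_div, rpow_inv_rpow (sub_pos.2 (rpow_lt_rpow hα.1.le hα.2 hq)).le hq.ne']

lemma one_add_div_circleGraph_rpow (hq : 0 < q) (hα : α ∈ Ioo 0 r) :
    1 + (α / circleGraph q r α) ^ q = (r / circleGraph q r α) ^ q := by
  have hs := circleGraph_pos hq hα
  have hsq := circleGraph_rpow hq hα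
  have hw : r ^ q - α ^ q ≠ 0 := hsq ▸ (rpow_pos_of_pos hs q).ne'
  rw [div_rpow hα.1.le hs.le, div_rpow (hα.1.trans hα.2).le hs.le, hsq]
  field_simp
  ring

lemma hasDerivAt_circleGraph (hq : 1 < q) (hα : α ∈ Ioo 0 r) :
    HasDerivAt (circleGraph q r) (-(α / circleGraph q r α) ^ (q - 1)) α := by
  have hw : 0 < r ^ q - α ^ q := sub_pos.2 (rpow_lt_rpow hα.1.le hα.2 (by linarith))
  have h := ((hasDerivAt_rpow_const (p := q) (Or.inl hα.1.ne')).const_sub (r ^ q)).rpow_const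
    (p := 1 / q) (Or.inl hw.ne')
  refine h.congr_deriv ?_
  rw [div_rpow hα.1.le (circleGraph_pos (by linarith) hα).le, circleGraph, ← rpow_mul hw.le,
    show 1 / q - 1 = -(1 / q * (q - 1)) by field_simp; ring, rpow_neg hw.le]
  field_simp

lemma hasDerivAt_div_circleGraph (hq : 1 < q) (hα : α ∈ Ioo 0 r) :
    HasDerivAt (fun x => x / circleGraph q r x)
      ((r / circleGraph q r α) ^ q / circleGraph q r α) α := by
  have hs := circleGraph_pos (by linarith) hα
  refine ((hasDerivAt_id' α).div (hasDerivAt_circleGraph hq hα) hs.ne').congr_deriv ?_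
  have hα0 := hα.1.ne'
  rw [← one_add_div_circleGraph_rpow (by linarith) hα, rpow_sub_one (div_pos hα.1 hs).ne']
  field_simp
  ring

lemma hasDerivAt_div_circleGraph_rpow (hq : 1 < q) (hα : α ∈ Ioo 0 r) :
    HasDerivAt (fun x => (x / circleGraph q r x) ^ (q - 1))
      ((q - 1) * (α / circleGraph q r α) ^ (q - 2) *
        ((r / circleGraph q r α) ^ q / circleGraph q r α)) α := by
  have ht := div_pos hα.1 (circleGraph_pos (by linarith) hα)
  refine ((hasDerivAt_div_circleGraph hq hα).rpow_const (Or.inl ht.ne')).congr_deriv ?_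
  rw [sub_sub, one_add_one_eq_two]
  ring

end

section

variable {q r s : ℝ}

lemma principalCurvature₁_eq {t : ℝ} (hq : 1 < q) (ht : 0 < t) (hs : 0 < s) (hr : 0 < r)
    (h : 1 + t ^ q = (r / s) ^ q) :
    principalCurvature₁ q (t ^ (q - 1)) ((q - 1) * t ^ (q - 2) * ((r / s) ^ q / s)) = -1 / r := by
  have hrs : 0 < r / s := div_pos hr hs
  rw [principalCurvature₁, rpow_rpow_div ht.le (by linarith), rpow_rpow_div ht.le (by linarith), h,
    rpow_rpow_div hrs.le (by linarith), rpow_neg hrs.le, rpow_neg ht.le, rpow_add_one hrs.ne']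
  have : q - 1 ≠ 0 := by linarith
  field_simp

lemma principalCurvature₂_eq {α : ℝ} (hq : 1 < q) (hα : 0 < α) (hs : 0 < s) (hr : 0 < r)
    (h : 1 + (α / s) ^ q = (r / s) ^ q) :
    principalCurvature₂ q α ((α / s) ^ (q - 1)) = -1 / r := by
  have ht : 0 ≤ α / s := by positivity
  rw [principalCurvature₂, rpow_rpow_div ht (by linarith), rpow_rpow_div ht (by linarith), h,
    rpow_rpow_div (by positivity) (by linarith), rpow_neg_one, rpow_one]
  field_simp

end

/-- The sphere of radius `r` of the norm `‖x‖ = ((x₁²+x₂²)^m + x₃^{2m})^{1/(2m)}`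
(translated along the rotation axis), with profile
`u(α) = c − (r^{2m} − α^{2m})^{1/(2m)}` on `(0, r)`, satisfies `u' > 0` and has both
principal curvatures constant equal to `−1/r`. -/
theorem sphere_principal_curvatures (m : ℕ) (hm : 2 ≤ m) (r c : ℝ) (hr : 0 < r)
    (u : ℝ → ℝ)
    (hu : ∀ α, u α = c - (r ^ (2 * m) - α ^ (2 * m)) ^ ((1 : ℝ) / (2 * (m : ℝ))))
    (k₁ k₂ : ℝ → ℝ)
    (hk₁ : ∀ α, k₁ α =
      -(1 / (2 * (m : ℝ) - 1)) *
        (1 + deriv u α ^ ((2 * (m : ℝ)) / (2 * (m : ℝ) - 1)))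
          ^ (-(2 * (m : ℝ) + 1) / (2 * (m : ℝ))) *
        deriv u α ^ (-(2 * (m : ℝ) - 2) / (2 * (m : ℝ) - 1)) *
        deriv (deriv u) α)
    (hk₂ : ∀ α, k₂ α =
      -(1 / α) * (1 + deriv u α ^ ((2 * (m : ℝ)) / (2 * (m : ℝ) - 1)))
          ^ (-(1 : ℝ) / (2 * (m : ℝ))) *
        deriv u α ^ ((1 : ℝ) / (2 * (m : ℝ) - 1))) :
    ∀ α ∈ Set.Ioo (0 : ℝ) r,
      0 < deriv u α ∧ k₁ α = -1 / r ∧ k₂ α = -1 / r := by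
  intro α hα
  have hq : 1 < 2 * (m : ℝ) := by
    have : (2 : ℝ) ≤ m := by exact_mod_cast hm
    linarith
  have hu_eq : u = fun x => c - circleGraph (2 * m) r x := by
    funext x
    rw [hu, circleGraph, ← rpow_natCast, ← rpow_natCast]
    push_cast
    rfl
  have hu' : ∀ x ∈ Ioo 0 r,
      HasDerivAt u ((x / circleGraph (2 * m) r x) ^ (2 * (m : ℝ) - 1)) x := fun x hx => by
    simpa [hu_eq] using (hasDerivAt_circleGraph hq hx).const_sub c
  have hu'' := (hasDerivAt_div_circleGraph_rpow hq hα).congr_of_eventuallyEq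
    (Filter.eventually_of_mem (Ioo_mem_nhds hα.1 hα.2) fun x hx => (hu' x hx).deriv)
  have hq0 : 0 < 2 * (m : ℝ) := by linarith
  have hs := circleGraph_pos hq0 hα
  have hsphere := one_add_div_circleGraph_rpow hq0 hα
  refine ⟨?_, ?_, ?_⟩
  · rw [(hu' α hα).deriv]
    exact rpow_pos_of_pos (div_pos hα.1 hs) _
  · rw [hk₁, (hu' α hα).deriv, hu''.deriv]
    exact principalCurvature₁_eq hq (div_pos hα.1 hs) hs hr hsphere
  · rw [hk₂, (hu' α hα).deriv]
    exact principalCurvature₂_eq hq hα.1 hs hr hsphere
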